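/- Uniqueness criterion at 0. Let 0 ≤ α < 1 < β, k := ⌈α+β⌉, A := {0,…,k−1}. The string u^{α,β} always satisfies φ̄_∞^{α,β}(u^{α,β}) = 0 and φ̄_∞^{α,β}(σu^{α,β}) = α, and the following are equivalent: (1) the pair of equations φ̄_∞^{α,β}(u) = 0 and φ̄_∞^{α,β}(σu) = α has exactly one solution u ∈ A^ℕ; (2) either T̂_{α,β}(0) = 0 (i.e. 0 is a fixed point, equivalently α = 0), or T̂ⁿ_{α,β}(0) ≠ 0 for all n ≥ 1; (3) u^{α,β} is not periodic (σᵖu^{α,β} ≠ u^{α,β} for all p ≥ 1) or u^{α,β} is the constant string 0^∞. -/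

import Mathlib

open Filter Set

/-- The shift map on one-sided sequences. -/
def shft (x : ℕ → ℕ) : ℕ → ℕ := fun n => x (n + 1)

/-- Strict lexicographic order on one-sided sequences:
`x ≺ y` iff they differ and `x m < y m` at the first index `m` where they differ. -/
def lexLt (x y : ℕ → ℕ) : Prop := ∃ m, (∀ i, i < m → x i = y i) ∧ x m < y m

/-- Lexicographic order `x ≼ y` on one-sided sequences. -/
def lexLe (x y : ℕ → ℕ) : Prop := x = y ∨ lexLt x y

/-- The map `φ̄^{α,β} : ℝ → [0,1]`:  `0` for `t ≤ α`, `(t-α)/β` for `α ≤ t ≤ α+β`,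
`1` for `t ≥ α+β`. -/
noncomputable def phiB (α β t : ℝ) : ℝ :=
  if t ≤ α then 0 else if α + β ≤ t then 1 else (t - α) / β

/-- `φ̄ₙ^{α,β}(x) = φ̄^{α,β}(x₀ + φ̄^{α,β}(x₁ + ⋯ + φ̄^{α,β}(x_{n-1})⋯))`. -/
noncomputable def phiBN (α β : ℝ) : ℕ → (ℕ → ℕ) → ℝ
  | 0, _ => 0
  | n + 1, x => phiB α β (x 0 + phiBN α β n (shft x))

/-- `φ̄_∞^{α,β}(x) = limₙ φ̄ₙ^{α,β}(x)`; the sequence `φ̄ₙ^{α,β}(x)` is nondecreasing in `n`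
and bounded, so its limit is its supremum. -/
noncomputable def phiBInf (α β : ℝ) (x : ℕ → ℕ) : ℝ := ⨆ n, phiBN α β n x

/-- `T̂_{α,β}(x) = βx + α − ⌊βx + α⌋`. -/
noncomputable def Tlow (α β x : ℝ) : ℝ := β * x + α - ⌊β * x + α⌋

/-- `Ť_{α,β}(x) = βx + α + 1 − ⌈βx + α⌉`. -/
noncomputable def Thigh (α β x : ℝ) : ℝ := β * x + α + 1 - ⌈β * x + α⌉

/-- `k = ⌈α + β⌉`, the size of the alphabet `A = {0, …, k-1}`. -/
noncomputable def kAB (α β : ℝ) : ℕ := (⌈α + β⌉).toNat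

/-- The string `u^{α,β}`, the coding of the orbit of `0`:
`u^{α,β}ₙ = ⌊β T̂ⁿ_{α,β}(0) + α⌋`. -/
noncomputable def uItin (α β : ℝ) : ℕ → ℕ := fun n => (⌊β * (Tlow α β)^[n] 0 + α⌋).toNat

/-- The string `v^{α,β}`, the coding of the orbit of `1`:
`v^{α,β}ₙ = ⌈β Ťⁿ_{α,β}(1) + α⌉ − 1`. -/
noncomputable def vItin (α β : ℝ) : ℕ → ℕ := fun n => (⌈β * (Thigh α β)^[n] 1 + α⌉ - 1).toNat

/-- The shift space `Σ(u,v) = {x ∈ A^ℕ : u ≼ σⁿx ≼ v for all n ≥ 0}`, `A = {0,…,k-1}`. -/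
def SigSet (k : ℕ) (u v : ℕ → ℕ) : Set (ℕ → ℕ) :=
  {x | (∀ i, x i < k) ∧ ∀ n, lexLe u (shft^[n] x) ∧ lexLe (shft^[n] x) v}

/-- The number of words of length `n` in the language of `Σ(u,v)` (prefixes of elements). -/
noncomputable def nWords (k : ℕ) (u v : ℕ → ℕ) (n : ℕ) : ℕ :=
  Nat.card {w : Fin n → ℕ // ∃ x ∈ SigSet k u v, ∀ i : Fin n, x i.1 = w i}

/-- The topological entropy (base 2) of `Σ(u,v)`:
`h = limₙ (1/n) log₂ card(Lₙ)` (the limit exists by subadditivity, so it equals the limsup;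
it is `0` when `Σ(u,v) = ∅`). -/
noncomputable def entS (k : ℕ) (u v : ℕ → ℕ) : ℝ :=
  Filter.limsup (fun n : ℕ => Real.logb 2 (nWords k u v n) / (n : ℝ)) Filter.atTop

/-- Concatenation of the word `w₀ ⋯ w_{p-1}` (the first `p` letters of `w`) with the
string `y`. -/
def wcat (p : ℕ) (w y : ℕ → ℕ) : ℕ → ℕ := fun n => if n < p then w n else y (n - p)

/-!
Write `xₙ := T̂ⁿ(0)`. Since `β xₙ + α = uₙ + xₙ₊₁` and `φ̄(β z + α) = z` on `[0,1)`, the orbit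
satisfies `xₘ = φ̄(uₘ + xₘ₊₁)`, the same recursion `Vₘ = φ̄(yₘ + Vₘ₊₁)` that `Vₘ := φ̄_∞(σᵐy)`
satisfies for any string `y`. As `φ̄` is `1/β`-Lipschitz with `β > 1`, a `[0,1]`-valued solution of
this recursion is unique, so `φ̄_∞(σᵐu) = xₘ`.

Conversely, for a solution `y` of the two equations, `φ̄_∞(σᵐy) = xₘ` propagates from `m` to
`m + 1` as long as `xₘ₊₁ ≠ 0` (or trivially when `α = 0`), and then `y = u`. If instead
`x_{q+1} = 0` with `α > 0`, the letter `u_q ≥ 1` can be lowered by one and followed by the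
maximal tail `(k-1)^∞`, whose value is `1`: since `u_q + x_{q+1} = (u_q - 1) + 1`, this gives a
second solution. Finally, `σᵖu = u` iff `x_p = 0`: one direction because `x_p = φ̄_∞(σᵖu)`, the
other because `x_p = 0` makes the orbit of `0` periodic.
-/

section PhiB

variable {α β : ℝ}

lemma phiB_eq_max_min (hβ : 0 < β) (t : ℝ) :
    phiB α β t = max (min ((t - α) / β) 1) 0 := by
  unfold phiB
  split_ifs with h₁ h₂
  · have : (t - α) / β ≤ 0 := div_nonpos_of_nonpos_of_nonneg (by linarith) hβ.le
    rw [min_eq_left (this.trans zero_le_one), max_eq_right this]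
  · have : 1 ≤ (t - α) / β := (one_le_div hβ).mpr (by linarith)
    rw [min_eq_right this, max_eq_left zero_le_one]
  · have h₀ : 0 ≤ (t - α) / β := div_nonneg (by linarith) hβ.le
    have h₁ : (t - α) / β ≤ 1 := (div_le_one hβ).mpr (by linarith)
    rw [min_eq_left h₁, max_eq_left h₀]

lemma phiB_nonneg (hβ : 0 < β) (t : ℝ) : 0 ≤ phiB α β t := by
  rw [phiB_eq_max_min hβ]
  exact le_max_right _ _

lemma phiB_le_one (hβ : 0 < β) (t : ℝ) : phiB α β t ≤ 1 := by
  rw [phiB_eq_max_min hβ]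
  exact max_le (min_le_right _ _) zero_le_one

lemma phiB_monotone (hβ : 0 < β) : Monotone (phiB α β) := by
  intro a b hab
  simp only [phiB_eq_max_min hβ]
  gcongr

lemma abs_phiB_sub_le (hβ : 0 < β) (a b : ℝ) :
    |phiB α β a - phiB α β b| ≤ |a - b| / β := by
  simp only [phiB_eq_max_min hβ]
  calc _ ≤ |min ((a - α) / β) 1 - min ((b - α) / β) 1| := abs_max_sub_max_le_abs _ _ _
    _ ≤ max |(a - α) / β - (b - α) / β| |1 - 1| := abs_min_sub_min_le_max _ _ _ _
    _ = |a - b| / β := by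
      rw [sub_self, abs_zero, max_eq_left (abs_nonneg _), ← sub_div, abs_div,
        abs_of_pos hβ, sub_sub_sub_cancel_right]

lemma continuous_phiB (hβ : 0 < β) : Continuous (phiB α β) := by
  rw [show phiB α β = fun t => max (min ((t - α) / β) 1) 0 from funext (phiB_eq_max_min hβ)]
  fun_prop

lemma phiB_eq_zero_iff (hβ : 0 < β) {t : ℝ} : phiB α β t = 0 ↔ t ≤ α := by
  unfold phiB
  split_ifs with h₁ h₂
  · simpa using h₁
  · simp only [one_ne_zero, false_iff]
    linarith
  · have : 0 < (t - α) / β := div_pos (by linarith) hβ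
    constructor <;> intro h <;> linarith

lemma phiB_of_add_le (hβ : 0 < β) {t : ℝ} (ht : α + β ≤ t) : phiB α β t = 1 := by
  rw [phiB, if_neg (by linarith), if_pos ht]

lemma eq_of_phiB_eq (hβ : 0 < β) {t z : ℝ} (h : phiB α β t = z) (hz₀ : 0 < z) (hz₁ : z < 1) :
    t = β * z + α := by
  unfold phiB at h
  split_ifs at h
  · linarith
  · linarith
  · field_simp at h
    linarith

lemma phiB_mul_add (hβ : 0 < β) {z : ℝ} (hz₀ : 0 ≤ z) (hz₁ : z < 1) :
    phiB α β (β * z + α) = z := by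
  unfold phiB
  split_ifs
  · nlinarith
  · nlinarith
  · field_simp
    ring

end PhiB

lemma shft_iterate_apply (y : ℕ → ℕ) (m i : ℕ) : shft^[m] y i = y (m + i) := by
  induction m generalizing y with
  | zero => simp
  | succ m ih =>
    rw [Function.iterate_succ_apply, ih]
    simp only [shft]
    congr 1
    omega

section PhiBInf

variable {α β : ℝ}

lemma phiBN_le_one (hβ : 0 < β) (n : ℕ) (x : ℕ → ℕ) : phiBN α β n x ≤ 1 := by
  cases n with
  | zero => exact zero_le_one
  | succ n => exact phiB_le_one hβ _

lemma phiBN_le_succ (hβ : 0 < β) (n : ℕ) (x : ℕ → ℕ) :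
    phiBN α β n x ≤ phiBN α β (n + 1) x := by
  induction n generalizing x with
  | zero => exact phiB_nonneg hβ _
  | succ n ih => exact phiB_monotone hβ (add_le_add_right (ih (shft x)) _)

lemma bddAbove_range_phiBN (hβ : 0 < β) (x : ℕ → ℕ) :
    BddAbove (range fun n => phiBN α β n x) :=
  ⟨1, by rintro _ ⟨n, rfl⟩; exact phiBN_le_one hβ n x⟩

lemma tendsto_phiBN (hβ : 0 < β) (x : ℕ → ℕ) :
    Tendsto (fun n => phiBN α β n x) atTop (nhds (phiBInf α β x)) :=
  tendsto_atTop_ciSup (monotone_nat_of_le_succ fun n => phiBN_le_succ hβ n x)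
    (bddAbove_range_phiBN hβ x)

lemma phiBInf_nonneg (hβ : 0 < β) (x : ℕ → ℕ) : 0 ≤ phiBInf α β x :=
  le_ciSup (bddAbove_range_phiBN hβ x) 0

lemma phiBInf_le_one (hβ : 0 < β) (x : ℕ → ℕ) : phiBInf α β x ≤ 1 :=
  ciSup_le fun n => phiBN_le_one hβ n x

lemma phiBInf_eq_phiB (hβ : 0 < β) (y : ℕ → ℕ) :
    phiBInf α β y = phiB α β (y 0 + phiBInf α β (shft y)) := by
  have hsucc := (tendsto_phiBN (α := α) hβ y).comp (tendsto_add_atTop_nat 1)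
  have hlim := ((continuous_phiB (α := α) hβ).tendsto _).comp
    ((tendsto_phiBN (α := α) hβ (shft y)).const_add (y 0 : ℝ))
  exact tendsto_nhds_unique hsucc hlim

lemma phiBInf_shft_iterate (hβ : 0 < β) (y : ℕ → ℕ) (m : ℕ) :
    phiBInf α β (shft^[m] y) = phiB α β (y m + phiBInf α β (shft^[m + 1] y)) := by
  rw [phiBInf_eq_phiB hβ, shft_iterate_apply, add_zero, Function.iterate_succ_apply']

lemma eq_zero_of_le_div_succ (hβ : 1 < β) {d : ℕ → ℝ} (hd₀ : ∀ m, 0 ≤ d m)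
    (hd₁ : ∀ m, d m ≤ 1) (hd : ∀ m, d m ≤ d (m + 1) / β) (m : ℕ) : d m = 0 := by
  have hpow : ∀ n m, d m ≤ (1 / β) ^ n := by
    intro n
    induction n with
    | zero => simpa using hd₁
    | succ n ih =>
      intro m
      calc d m ≤ d (m + 1) / β := hd m
        _ ≤ (1 / β) ^ n / β := by gcongr; exact ih _
        _ = (1 / β) ^ (n + 1) := by rw [pow_succ]; ring
  have hlim : Tendsto (fun n => (1 / β) ^ n) atTop (nhds 0) :=
    tendsto_pow_atTop_nhds_zero_of_lt_one (by positivity) ((div_lt_one (by linarith)).mpr hβ)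
  exact le_antisymm (ge_of_tendsto' hlim fun n => hpow n m) (hd₀ m)

lemma phiBInf_shft_iterate_eq (hβ : 1 < β) {y : ℕ → ℕ} {z : ℕ → ℝ}
    (hz₀ : ∀ m, 0 ≤ z m) (hz₁ : ∀ m, z m ≤ 1)
    (hz : ∀ m, phiB α β (y m + z (m + 1)) = z m) (m : ℕ) :
    phiBInf α β (shft^[m] y) = z m := by
  have hβ₀ : 0 < β := by linarith
  have hd := eq_zero_of_le_div_succ hβ (d := fun m => |z m - phiBInf α β (shft^[m] y)|)
    (fun _ => abs_nonneg _)
    (fun m => abs_sub_le_iff.mpr ⟨by linarith [hz₁ m, phiBInf_nonneg (α := α) hβ₀ (shft^[m] y)],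
      by linarith [hz₀ m, phiBInf_le_one (α := α) hβ₀ (shft^[m] y)]⟩)
    (fun m => by
      simpa only [← hz m, phiBInf_shft_iterate hβ₀ y m, add_sub_add_left_eq_sub]
        using abs_phiB_sub_le (α := α) hβ₀ (y m + z (m + 1))
          (y m + phiBInf α β (shft^[m + 1] y)))
    m
  linarith [abs_eq_zero.mp hd]

lemma phiBInf_shft_iterate_succ_le (hβ : 0 < β) {y : ℕ → ℕ} {m : ℕ}
    (h : phiBInf α β (shft^[m] y) = 0) : phiBInf α β (shft^[m + 1] y) ≤ α := by
  rw [phiBInf_shft_iterate hβ, phiB_eq_zero_iff hβ] at h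
  linarith [(Nat.cast_nonneg (y m) : (0 : ℝ) ≤ y m)]

lemma le_kAB (hαβ : 0 ≤ α + β) : α + β ≤ kAB α β := by
  have hcast : ((kAB α β : ℕ) : ℝ) = ((⌈α + β⌉ : ℤ) : ℝ) := by
    unfold kAB
    exact_mod_cast Int.toNat_of_nonneg (Int.ceil_nonneg hαβ)
  exact hcast ▸ Int.le_ceil _

lemma phiB_kAB_sub_one_add_one (hα : 0 ≤ α) (hβ : 1 < β) :
    phiB α β ((kAB α β - 1 : ℕ) + 1) = 1 := by
  have hk := le_kAB (α := α) (β := β) (by linarith)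
  have hk₁ : 1 ≤ kAB α β := by exact_mod_cast (show (1 : ℝ) ≤ kAB α β by linarith)
  refine phiB_of_add_le (by linarith) ?_
  push_cast [Nat.cast_sub hk₁]
  linarith

end PhiBInf

section Orbit

variable {α β : ℝ}

lemma Tlow_zero (hα₀ : 0 ≤ α) (hα₁ : α < 1) : Tlow α β 0 = α := by
  rw [Tlow, mul_zero, zero_add, Int.floor_eq_zero_iff.mpr ⟨hα₀, hα₁⟩, Int.cast_zero, sub_zero]

lemma Tlow_iterate_one (hα₀ : 0 ≤ α) (hα₁ : α < 1) : (Tlow α β)^[1] 0 = α :=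
  Tlow_zero hα₀ hα₁

lemma Tlow_iterate_mem_Ico (n : ℕ) : (Tlow α β)^[n] 0 ∈ Ico 0 1 := by
  cases n with
  | zero => exact ⟨le_rfl, one_pos⟩
  | succ n =>
    rw [Function.iterate_succ_apply']
    exact ⟨Int.fract_nonneg _, Int.fract_lt_one _⟩

lemma mul_Tlow_iterate_add (hα : 0 ≤ α) (hβ : 0 < β) (n : ℕ) :
    β * (Tlow α β)^[n] 0 + α = uItin α β n + (Tlow α β)^[n + 1] 0 := by
  have hpos : 0 ≤ β * (Tlow α β)^[n] 0 + α :=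
    add_nonneg (mul_nonneg hβ.le (Tlow_iterate_mem_Ico n).1) hα
  have hcast : ((uItin α β n : ℕ) : ℝ) = ((⌊β * (Tlow α β)^[n] 0 + α⌋ : ℤ) : ℝ) := by
    unfold uItin
    exact_mod_cast Int.toNat_of_nonneg (Int.floor_nonneg.mpr hpos)
  rw [hcast, Function.iterate_succ_apply', Tlow]
  ring

lemma phiB_uItin_add_Tlow_iterate (hα : 0 ≤ α) (hβ : 0 < β) (m : ℕ) :
    phiB α β (uItin α β m + (Tlow α β)^[m + 1] 0) = (Tlow α β)^[m] 0 := by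
  rw [← mul_Tlow_iterate_add hα hβ]
  exact phiB_mul_add hβ (Tlow_iterate_mem_Ico m).1 (Tlow_iterate_mem_Ico m).2

lemma uItin_lt_kAB (hα : 0 ≤ α) (hβ : 1 < β) (n : ℕ) : uItin α β n < kAB α β := by
  have hid := mul_Tlow_iterate_add hα (by linarith) n
  have hx := Tlow_iterate_mem_Ico (α := α) (β := β) n
  have hx' := Tlow_iterate_mem_Ico (α := α) (β := β) (n + 1)
  have : (uItin α β n : ℝ) < kAB α β := by
    nlinarith [le_kAB (α := α) (β := β) (by linarith), hx.2, hx'.1]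
  exact_mod_cast this

lemma phiBInf_shft_iterate_uItin (hα : 0 ≤ α) (hβ : 1 < β) (m : ℕ) :
    phiBInf α β (shft^[m] (uItin α β)) = (Tlow α β)^[m] 0 :=
  phiBInf_shft_iterate_eq hβ (fun m => (Tlow_iterate_mem_Ico m).1)
    (fun m => (Tlow_iterate_mem_Ico m).2.le) (phiB_uItin_add_Tlow_iterate hα (by linarith)) m

lemma shft_iterate_uItin_of_Tlow_iterate_eq_zero {p : ℕ} (hp : (Tlow α β)^[p] 0 = 0) :
    shft^[p] (uItin α β) = uItin α β := by
  funext i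
  rw [shft_iterate_apply, uItin, uItin, Nat.add_comm p i, Function.iterate_add_apply, hp]

lemma uItin_zero_left : uItin 0 β = fun _ => 0 := by
  have h : Tlow 0 β 0 = 0 := by simp [Tlow]
  funext n
  simp [uItin, Function.iterate_fixed h]

end Orbit

section Solutions

variable {α β : ℝ}

lemma eq_uItin_of_phiBInf_shft_iterate (hα₀ : 0 ≤ α) (hα₁ : α < 1) (hβ : 0 < β) {y : ℕ → ℕ}
    (hy : ∀ m, phiBInf α β (shft^[m] y) = (Tlow α β)^[m] 0) : y = uItin α β := by
  funext m
  have hym : phiB α β (y m + (Tlow α β)^[m + 1] 0) = (Tlow α β)^[m] 0 := by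
    rw [← hy m, ← hy (m + 1)]
    exact (phiBInf_shft_iterate hβ y m).symm
  have hum := mul_Tlow_iterate_add hα₀ hβ m
  rcases (Tlow_iterate_mem_Ico (α := α) (β := β) m).1.eq_or_lt with hx | hx
  · rw [← hx, phiB_eq_zero_iff hβ] at hym
    rw [← hx, mul_zero, zero_add] at hum
    have hu : uItin α β m < 1 := by
      exact_mod_cast (show (uItin α β m : ℝ) < 1 by
        linarith [(Tlow_iterate_mem_Ico (α := α) (β := β) (m + 1)).1])
    have hyu : y m ≤ uItin α β m := by exact_mod_cast (show (y m : ℝ) ≤ uItin α β m by linarith)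
    omega
  · have := eq_of_phiB_eq hβ hym hx (Tlow_iterate_mem_Ico m).2
    exact_mod_cast (show (y m : ℝ) = uItin α β m by linarith)

lemma phiBInf_shft_iterate_succ_eq (hα : 0 ≤ α) (hβ : 0 < β) {y : ℕ → ℕ} {m : ℕ}
    (hm : phiBInf α β (shft^[m] y) = (Tlow α β)^[m] 0)
    (hxm : (Tlow α β)^[m] 0 ≠ 0) (hxm₁ : (Tlow α β)^[m + 1] 0 ≠ 0) :
    phiBInf α β (shft^[m + 1] y) = (Tlow α β)^[m + 1] 0 := by
  have hx := Tlow_iterate_mem_Ico (α := α) (β := β) m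
  have hx₁ := Tlow_iterate_mem_Ico (α := α) (β := β) (m + 1)
  rw [phiBInf_shft_iterate hβ] at hm
  have hsum := (eq_of_phiB_eq hβ hm (lt_of_le_of_ne hx.1 (Ne.symm hxm)) hx.2).trans
    (mul_Tlow_iterate_add hα hβ m)
  have hW₀ := phiBInf_nonneg (α := α) hβ (shft^[m + 1] y)
  have hW₁ := phiBInf_le_one (α := α) hβ (shft^[m + 1] y)
  have hx₁pos := lt_of_le_of_ne hx₁.1 (Ne.symm hxm₁)
  have h₁ : (y m : ℤ) < uItin α β m + 1 := by
    exact_mod_cast (show (y m : ℝ) < uItin α β m + 1 by linarith [hx₁.2])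
  have h₂ : (uItin α β m : ℤ) < y m + 1 := by
    exact_mod_cast (show (uItin α β m : ℝ) < y m + 1 by linarith)
  have hyu : y m = uItin α β m := by omega
  rw [hyu] at hsum
  linarith

lemma phiBInf_shft_iterate_of_solution (hα₀ : 0 ≤ α) (hα₁ : α < 1) (hβ : 0 < β)
    (hT : Tlow α β 0 = 0 ∨ ∀ n, 1 ≤ n → (Tlow α β)^[n] 0 ≠ 0) {y : ℕ → ℕ}
    (hy₀ : phiBInf α β y = 0) (hy₁ : phiBInf α β (shft y) = α) (m : ℕ) :
    phiBInf α β (shft^[m] y) = (Tlow α β)^[m] 0 := by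
  induction m with
  | zero => exact hy₀
  | succ m ih =>
    rcases hT with hT | hT
    · have hα : α = 0 := (Tlow_zero hα₀ hα₁).symm.trans hT
      rw [Function.iterate_fixed hT] at ih ⊢
      exact le_antisymm (hα ▸ phiBInf_shft_iterate_succ_le hβ ih) (phiBInf_nonneg hβ _)
    · rcases Nat.eq_zero_or_pos m with rfl | hm
      · rw [Tlow_iterate_one hα₀ hα₁]
        exact hy₁
      · exact phiBInf_shft_iterate_succ_eq hα₀ hβ ih (hT m hm) (hT (m + 1) (by omega))

lemma one_le_uItin_of_Tlow_iterate_succ_eq_zero (hα : 0 < α) (hβ : 0 < β) {q : ℕ}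
    (hq : (Tlow α β)^[q + 1] 0 = 0) : 1 ≤ uItin α β q := by
  have hid := mul_Tlow_iterate_add hα.le hβ q
  rw [hq, add_zero] at hid
  have : (0 : ℝ) < uItin α β q := by nlinarith [(Tlow_iterate_mem_Ico (α := α) (β := β) q).1]
  exact Nat.cast_pos.mp this

lemma exists_solution_ne_uItin (hα₀ : 0 < α) (hα₁ : α < 1) (hβ : 1 < β) {q : ℕ}
    (hq : (Tlow α β)^[q + 1] 0 = 0) :
    ∃ w : ℕ → ℕ, w ≠ uItin α β ∧ (∀ i, w i < kAB α β) ∧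
      phiBInf α β w = 0 ∧ phiBInf α β (shft w) = α := by
  have hβ₀ : 0 < β := by linarith
  have hq₁ : 1 ≤ q := by
    rcases Nat.eq_zero_or_pos q with rfl | h
    · rw [Tlow_iterate_one hα₀.le hα₁] at hq
      exact absurd hq hα₀.ne'
    · exact h
  have hu := one_le_uItin_of_Tlow_iterate_succ_eq_zero hα₀ hβ₀ hq
  obtain ⟨w, hw⟩ : ∃ w : ℕ → ℕ, ∀ i,
      w i = if i < q then uItin α β i else if i = q then uItin α β q - 1 else kAB α β - 1 :=
    ⟨_, fun _ => rfl⟩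
  obtain ⟨z, hz⟩ : ∃ z : ℕ → ℝ, ∀ m, z m = if m ≤ q then (Tlow α β)^[m] 0 else 1 :=
    ⟨_, fun _ => rfl⟩
  have hzw : ∀ m, phiB α β (w m + z (m + 1)) = z m := by
    intro m
    rcases lt_trichotomy m q with h | rfl | h
    · simp only [hw, hz, if_pos h, if_pos (show m + 1 ≤ q by omega), if_pos h.le]
      exact phiB_uItin_add_Tlow_iterate hα₀.le hβ₀ m
    · simp only [hw, hz, lt_irrefl, if_false, if_true, le_refl,
        if_neg (show ¬ m + 1 ≤ m by omega)]
      rw [Nat.cast_sub hu, Nat.cast_one, sub_add_cancel]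
      simpa [hq] using phiB_uItin_add_Tlow_iterate hα₀.le hβ₀ m
    · simp only [hw, hz, if_neg (show ¬ m < q by omega), if_neg (show m ≠ q by omega),
        if_neg (show ¬ m ≤ q by omega), if_neg (show ¬ m + 1 ≤ q by omega)]
      exact phiB_kAB_sub_one_add_one hα₀.le hβ
  have hzw_eq := phiBInf_shft_iterate_eq hβ (y := w) (z := z)
    (fun m => by simp only [hz]; split_ifs <;> [exact (Tlow_iterate_mem_Ico m).1; exact zero_le_one])
    (fun m => by simp only [hz]; split_ifs <;> [exact (Tlow_iterate_mem_Ico m).2.le; exact le_rfl])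
    hzw
  refine ⟨w, fun h => ?_, fun i => ?_, ?_, ?_⟩
  · have := congrFun h q
    simp only [hw, lt_irrefl, if_false, if_true] at this
    omega
  · simp only [hw]
    have := uItin_lt_kAB hα₀.le hβ i
    have := uItin_lt_kAB hα₀.le hβ q
    split_ifs <;> omega
  · simpa [hz] using hzw_eq 0
  · simpa [hz, hq₁, Tlow_zero hα₀.le hα₁] using hzw_eq 1

end Solutions

/-- **Uniqueness criterion at 0.** Let `0 ≤ α < 1 < β`, `k = ⌈α+β⌉`. The string `u^{α,β}`
always satisfies `φ̄_∞^{α,β}(u^{α,β}) = 0` and `φ̄_∞^{α,β}(σ u^{α,β}) = α`, and the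
following are equivalent: (1) the equations `φ̄_∞^{α,β}(u) = 0`, `φ̄_∞^{α,β}(σu) = α`
have exactly one solution `u ∈ A^ℕ`; (2) either `T̂_{α,β}(0) = 0` or `T̂ⁿ_{α,β}(0) ≠ 0`
for all `n ≥ 1`; (3) `u^{α,β}` is not periodic or `u^{α,β} = 0^∞`. -/
theorem uniqueness_at_zero (α β : ℝ) (hα0 : 0 ≤ α) (hα1 : α < 1) (hβ : 1 < β) :
    (phiBInf α β (uItin α β) = 0 ∧ phiBInf α β (shft (uItin α β)) = α) ∧
    ((∃! u : ℕ → ℕ, (∀ i, u i < kAB α β) ∧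
        phiBInf α β u = 0 ∧ phiBInf α β (shft u) = α) ↔
      (Tlow α β 0 = 0 ∨ ∀ n, 1 ≤ n → (Tlow α β)^[n] 0 ≠ 0)) ∧
    ((Tlow α β 0 = 0 ∨ ∀ n, 1 ≤ n → (Tlow α β)^[n] 0 ≠ 0) ↔
      ((∀ p, 1 ≤ p → shft^[p] (uItin α β) ≠ uItin α β) ∨
        uItin α β = fun _ => 0)) := by
  have hβ₀ : 0 < β := by linarith
  have hV := phiBInf_shft_iterate_uItin hα0 hβ
  have hsol : phiBInf α β (uItin α β) = 0 ∧ phiBInf α β (shft (uItin α β)) = α :=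
    ⟨hV 0, (hV 1).trans (Tlow_iterate_one hα0 hα1)⟩
  have hT₀ := Tlow_zero (β := β) hα0 hα1
  refine ⟨hsol, ⟨fun huniq => ?_, fun hT => ?_⟩, ⟨?_, ?_⟩⟩
  · by_contra hT
    push Not at hT
    obtain ⟨hα, n, hn, hxn⟩ := hT
    obtain ⟨q, rfl⟩ := Nat.exists_eq_add_of_le' hn
    obtain ⟨w, hwu, hw⟩ := exists_solution_ne_uItin
      (lt_of_le_of_ne hα0 fun h => hα (hT₀.trans h.symm)) hα1 hβ hxn
    exact hwu (huniq.unique hw ⟨uItin_lt_kAB hα0 hβ, hsol⟩)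
  · refine ⟨uItin α β, ⟨uItin_lt_kAB hα0 hβ, hsol⟩, fun y ⟨_, hy₀, hy₁⟩ => ?_⟩
    exact eq_uItin_of_phiBInf_shft_iterate hα0 hα1 hβ₀
      (phiBInf_shft_iterate_of_solution hα0 hα1 hβ₀ hT hy₀ hy₁)
  · rintro (hT | hT)
    · obtain rfl : α = 0 := hT₀.symm.trans hT
      exact Or.inr uItin_zero_left
    · refine Or.inl fun p hp hper => hT p hp ?_
      rw [← hV, hper, hsol.1]
  · rintro (hper | hu)
    · exact Or.inr fun n hn hxn => hper n hn (shft_iterate_uItin_of_Tlow_iterate_eq_zero hxn)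
    · have h₀ := hsol.1
      have h₁ := hsol.2
      rw [hu] at h₀ h₁
      exact Or.inl (hT₀.trans (h₁.symm.trans h₀))
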